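/- arXiv:2212.01881 — 2 statements merged into one kernel-verified Lean document; each statement's English description precedes it below -/
import Mathlib

section
/- Let A = {A_1, …, A_n} be a convex boundary (each A_i is a nonempty convex compact) in a finite-dimensional real normed space X, let d be a solution vector for A with all d_i > 0, let K_d = ⋂_{i=1}^n B_{d_i}(A_i), let F_j be the set of far points of A_j, and let HP_d(F) = ⋃_{j=1}^n (B_{d_j}(F_j) ∩ K_d). Then for every index i there exists a point p ∈ HP_d(F) such that p ∈ B_{d_i}(F_i) ∩ K_d or p ∈ ∂B_{d_i}(A_i). -/
/-!
If some point of `A i` is far, its nearest point in `K_d` will do. Otherwise every point of `A i`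
is within some `r < d i` of `K_d`, so for `r ≤ s < d i` the set
`K_s = {x ∈ K_d | dist(x, A i) ≤ s}` is strictly closer to `A i` than `d i`; minimality of the
Steiner sum then forces a point of some `A j` farther than `d j` from `K_s`. Letting `s → d i`,
compactness gives `a ∈ A j` and `p ∈ K_d` with `dist(a, p) ≤ d j` and `dist(p, A i) = d i`.
Since `dist(·, A i)` is convex, `K_d` is the closure of `⋃ s, K_s`, so `a` is a far point, and
`p` lies on `∂B_{d i}(A i)` because a convex function has no local maximum above its minimum.
-/

open Metric Set

/-- `steinerSum A K = ∑ i, d_H(A_i, K)` — the functional from the Fermat–Steiner problem. -/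
noncomputable def steinerSum {X : Type*} [PseudoMetricSpace X] {n : ℕ}
    (A : Fin n → Set X) (K : Set X) : ℝ :=
  ∑ i, Metric.hausdorffDist (A i) K

/-- A Steiner compact for the boundary `A`: a nonempty compact set minimizing
`steinerSum A` over nonempty compact sets. -/
def IsSteinerCompact {X : Type*} [PseudoMetricSpace X] {n : ℕ}
    (A : Fin n → Set X) (K : Set X) : Prop :=
  K.Nonempty ∧ IsCompact K ∧
    ∀ K' : Set X, K'.Nonempty → IsCompact K' → steinerSum A K ≤ steinerSum A K'

/-- `d` is a solution vector for the boundary `A`: `d i = d_H(A_i, K)` for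
some Steiner compact `K`. -/
def IsSolutionVector {X : Type*} [PseudoMetricSpace X] {n : ℕ}
    (A : Fin n → Set X) (d : Fin n → ℝ) : Prop :=
  ∃ K : Set X, IsSteinerCompact A K ∧ ∀ i, d i = Metric.hausdorffDist (A i) K

open Filter Topology

section PseudoMetric

variable {X : Type*} [PseudoMetricSpace X]

theorem Metric.mem_cthickening_iff_infDist_le {E : Set X} (hE : E.Nonempty) {δ : ℝ}
    (hδ : 0 ≤ δ) {x : X} : x ∈ cthickening δ E ↔ infDist x E ≤ δ := by
  rw [mem_cthickening_iff, infDist, ← ENNReal.le_ofReal_iff_toReal_le (infEDist_ne_top hE) hδ]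

theorem Metric.hausdorffDist_sep_infDist_le {C K : Set X} (hK : IsCompact K) {s : ℝ}
    (hs : 0 ≤ s) (hCK : ∀ a ∈ C, infDist a K ≤ s) :
    hausdorffDist C {x ∈ K | infDist x C ≤ s} ≤ s := by
  refine hausdorffDist_le_of_infDist hs (fun a ha => ?_) fun y hy => hy.2
  rcases K.eq_empty_or_nonempty with rfl | hKne
  · simpa using hs
  obtain ⟨p, hp, hap⟩ := hK.exists_infDist_eq_dist hKne a
  have hap' : dist a p ≤ s := hap ▸ hCK a ha
  have hpC : infDist p C ≤ s := (infDist_le_dist_of_mem ha).trans (by rwa [dist_comm])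
  have hpK : p ∈ {x ∈ K | infDist x C ≤ s} := ⟨hp, hpC⟩
  exact (infDist_le_dist_of_mem hpK).trans hap'

theorem isCompact_iInter_cthickening [ProperSpace X] {ι : Type*} {A : ι → Set X}
    (d : ι → ℝ) {i : ι} (hA : IsCompact (A i)) : IsCompact (⋂ j, cthickening (d j) (A j)) :=
  hA.cthickening.of_isClosed_subset (isClosed_iInter fun _ => isClosed_cthickening)
    (iInter_subset _ i)

end PseudoMetric

section Convex

variable {E : Type*} [SeminormedAddCommGroup E] [NormedSpace ℝ E]

theorem Convex.convexOn_infDist {s : Set E} (hs : Convex ℝ s) :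
    ConvexOn ℝ univ (infDist · s) := by
  refine ⟨convex_univ, fun x _ y _ a b ha hb hab => ?_⟩
  rcases s.eq_empty_or_nonempty with rfl | hne
  · simp
  refine le_of_forall_pos_le_add fun ε hε => ?_
  obtain ⟨u, hu, hxu⟩ := (infDist_lt_iff hne).1 (lt_add_of_pos_right (infDist x s) hε)
  obtain ⟨v, hv, hyv⟩ := (infDist_lt_iff hne).1 (lt_add_of_pos_right (infDist y s) hε)
  calc infDist (a • x + b • y) s ≤ dist (a • x + b • y) (a • u + b • v) :=
        infDist_le_dist_of_mem (hs hu hv ha hb hab)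
    _ ≤ a * dist x u + b * dist y v := by
        grw [dist_add_add_le, dist_smul₀, dist_smul₀, Real.norm_of_nonneg ha,
          Real.norm_of_nonneg hb]
    _ ≤ a * (infDist x s + ε) + b * (infDist y s + ε) := by gcongr
    _ = a • infDist x s + b • infDist y s + ε := by
        simp only [smul_eq_mul]; linear_combination ε * hab

theorem ConvexOn.notMem_interior_setOf_le {f : E → ℝ} (hf : ConvexOn ℝ univ f) {a p : E}
    (hap : f a < f p) : p ∉ interior {x | f x ≤ f p} := by
  intro hp
  have hray : Tendsto (fun t : ℝ => p + t • (p - a)) (𝓝[>] 0) (𝓝 p) :=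
    (Continuous.tendsto' (by fun_prop) 0 p (by simp)).mono_left nhdsWithin_le_nhds
  obtain ⟨t, hle, ht⟩ :=
    ((hray.eventually_mem (mem_interior_iff_mem_nhds.1 hp)).and self_mem_nhdsWithin).exists
  have ht' : (0 : ℝ) < 1 + t := by positivity
  have hseg : p ∈ openSegment ℝ (p + t • (p - a)) a := by
    refine ⟨1 / (1 + t), t / (1 + t), by positivity, div_pos ht ht', by field_simp, ?_⟩
    match_scalars <;> field_simp; ring
  exact (hf.lt_left_of_right_lt trivial trivial hseg hap).not_ge hle

theorem Convex.mem_frontier_cthickening {s : Set E} (hs : Convex ℝ s) (hne : s.Nonempty)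
    {δ : ℝ} (hδ : 0 < δ) {p : E} (hp : infDist p s = δ) :
    p ∈ frontier (Metric.cthickening δ s) := by
  obtain ⟨a, ha⟩ := hne
  have hcth : Metric.cthickening δ s = {x | infDist x s ≤ infDist p s} := by
    ext x; rw [mem_cthickening_iff_infDist_le ⟨a, ha⟩ hδ.le, hp]; rfl
  rw [frontier, isClosed_cthickening.closure_eq, hcth]
  have hap : infDist a s < infDist p s := by rwa [infDist_zero_of_mem ha, hp]
  exact ⟨le_refl (infDist p s), hs.convexOn_infDist.notMem_interior_setOf_le hap⟩

theorem ConvexOn.setOf_le_subset_closure_setOf_lt {K : Set E} {f : E → ℝ}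
    (hf : ConvexOn ℝ K f) {q : E} (hq : q ∈ K) {c : ℝ} (hqc : f q < c) :
    {x ∈ K | f x ≤ c} ⊆ closure {x ∈ K | f x < c} := by
  rintro x ⟨hx, hxc⟩
  refine closure_mono ?_ (segment_subset_closure_openSegment (left_mem_segment ℝ x q))
  rintro _ ⟨a, b, ha, hb, hab, rfl⟩
  refine ⟨hf.1 hx hq ha.le hb.le hab, (hf.2 hx hq ha.le hb.le hab).trans_lt ?_⟩
  have hc : a * c + b * c = c := by rw [← add_mul, hab, one_mul]
  simp only [smul_eq_mul]
  nlinarith [mul_le_mul_of_nonneg_left hxc ha.le, mul_lt_mul_of_pos_left hqc hb]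

theorem ConvexOn.le_infDist_of_forall_le_infDist_setOf_le {K : Set E} {f : E → ℝ}
    (hf : ConvexOn ℝ K f) {q : E} (hq : q ∈ K) {r c t : ℝ} (hqr : f q ≤ r) (hrc : r < c)
    (hKc : ∀ x ∈ K, f x ≤ c) {a : E}
    (h : ∀ s ∈ Ico r c, t ≤ infDist a {x ∈ K | f x ≤ s}) :
    t ≤ infDist a K := by
  have hL : {x ∈ K | f x < c}.Nonempty := ⟨q, hq, hqr.trans_lt hrc⟩
  have hKL : K ⊆ closure {x ∈ K | f x < c} := fun x hx =>
    hf.setOf_le_subset_closure_setOf_lt hq (hqr.trans_lt hrc) ⟨hx, hKc x hx⟩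
  calc t ≤ infDist a {x ∈ K | f x < c} := by
        refine (le_infDist hL).2 fun y ⟨hy, hyc⟩ => ?_
        exact (h (max r (f y)) ⟨le_max_left _ _, max_lt hrc hyc⟩).trans
          (infDist_le_dist_of_mem ⟨hy, le_max_right _ _⟩)
    _ = infDist a (closure {x ∈ K | f x < c}) := infDist_closure.symm
    _ ≤ infDist a K := infDist_le_infDist_of_subset hKL ⟨q, hq⟩

end Convex

section Compactness

variable {X : Type*} [MetricSpace X]

theorem exists_forall_le_infDist_setOf_le {ι : Type*} [Finite ι] {A : ι → Set X}
    (hA : ∀ j, IsCompact (A j)) {d : ι → ℝ} {K : Set X} (hK : IsCompact K) {f : X → ℝ}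
    (hf : Continuous f) {r c : ℝ} (hrc : r < c) (hKr : ∃ x ∈ K, f x ≤ r)
    (hAK : ∀ j, ∀ a ∈ A j, infDist a K ≤ d j)
    (h : ∀ s ∈ Ico r c, ∃ j, ∃ a ∈ A j, d j < infDist a {x ∈ K | f x ≤ s}) :
    ∃ j, ∃ a ∈ A j, ∃ p ∈ K, dist a p ≤ d j ∧ c ≤ f p ∧
      ∀ s ∈ Ico r c, d j ≤ infDist a {x ∈ K | f x ≤ s} := by
  obtain ⟨q, hq, hqr⟩ := hKr
  have : Nonempty (Ico r c) := ⟨⟨r, le_rfl, hrc⟩⟩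
  let Z : ι → Ico r c → Set (X × X) := fun j s =>
    (A j ×ˢ K) ∩ {z | dist z.1 z.2 ≤ d j} ∩ {z | (s : ℝ) ≤ f z.2} ∩
      {z | d j ≤ infDist z.1 {x ∈ K | f x ≤ s}}
  have hZanti : ∀ j, Antitone (Z j) := by
    rintro j s s' hss' z ⟨⟨hzK, hzs⟩, hzfar⟩
    have hsub : {x ∈ K | f x ≤ s} ⊆ {x ∈ K | f x ≤ s'} := fun x hx =>
      ⟨hx.1, hx.2.trans hss'⟩
    exact ⟨⟨hzK, (Subtype.coe_le_coe.2 hss').trans hzs⟩,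
      hzfar.trans (infDist_le_infDist_of_subset hsub ⟨q, hq, hqr.trans s.2.1⟩)⟩
  have hZcpt : ∀ j s, IsCompact (Z j s) := fun j s =>
    ((((hA j).prod hK).inter_right (isClosed_le (by fun_prop) continuous_const)).inter_right
      (isClosed_le continuous_const (hf.comp continuous_snd))).inter_right
      (isClosed_le continuous_const ((continuous_infDist_pt _).comp continuous_fst))
  have hZne : ∀ s, (⋃ j, Z j s).Nonempty := by
    rintro ⟨s, hs⟩
    obtain ⟨j, a, ha, hfar⟩ := h s hs
    obtain ⟨p, hp, hap⟩ := hK.exists_infDist_eq_dist ⟨q, hq⟩ a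
    have hapd : dist a p ≤ d j := hap ▸ hAK j a ha
    have hps : s ≤ f p := by
      by_contra! hps
      refine hfar.not_ge ((infDist_le_dist_of_mem ?_).trans hapd)
      exact (⟨hp, hps.le⟩ : p ∈ {x ∈ K | f x ≤ s})
    exact ⟨(a, p), mem_iUnion.2 ⟨j, ⟨⟨⟨ha, hp⟩, hapd⟩, hps⟩, hfar.le⟩⟩
  obtain ⟨⟨a, p⟩, hz⟩ := IsCompact.nonempty_iInter_of_directed_nonempty_isCompact_isClosed _
    (Antitone.directed_ge fun s s' hss' => iUnion_mono fun j => hZanti j hss') hZne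
    (fun s => isCompact_iUnion fun j => hZcpt j s)
    (fun s => (isCompact_iUnion fun j => hZcpt j s).isClosed)
  -- each `Z j` is antitone and there are finitely many `j`, so a single `j` serves every level
  rw [iInter_iUnion_of_antitone hZanti, mem_iUnion] at hz
  obtain ⟨j, hj⟩ := hz
  rw [mem_iInter] at hj
  have hjr := hj ⟨r, le_rfl, hrc⟩
  refine ⟨j, a, hjr.1.1.1.1, p, hjr.1.1.1.2, hjr.1.1.2, ?_, fun s hs => (hj ⟨s, hs⟩).2⟩
  refine le_of_forall_lt_imp_le_of_dense fun s hs => ?_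
  rcases lt_or_ge s r with hsr | hrs
  · exact hsr.le.trans hjr.1.2
  · exact (hj ⟨s, hrs, hs⟩).1.2

end Compactness

section Steiner

variable {X : Type*} [PseudoMetricSpace X] {n : ℕ} {A : Fin n → Set X} {d : Fin n → ℝ}

theorem IsSolutionVector.exists_subset_iInter_cthickening (hd : IsSolutionVector A d)
    (hAne : ∀ j, (A j).Nonempty) (hAb : ∀ j, Bornology.IsBounded (A j)) :
    ∃ K : Set X, K.Nonempty ∧ K ⊆ ⋂ j, cthickening (d j) (A j) ∧
      ∀ j, ∀ a ∈ A j, infDist a K ≤ d j := by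
  obtain ⟨K, ⟨hKne, hKc, -⟩, hdK⟩ := hd
  have hfin : ∀ j, hausdorffEDist (A j) K ≠ ⊤ := fun j =>
    hausdorffEDist_ne_top_of_nonempty_of_bounded (hAne j) hKne (hAb j) hKc.isBounded
  refine ⟨K, hKne, fun x hx => mem_iInter.2 fun j => ?_,
    fun j a ha => hdK j ▸ infDist_le_hausdorffDist_of_mem ha (hfin j)⟩
  rw [mem_cthickening_iff_infDist_le (hAne j) (hdK j ▸ hausdorffDist_nonneg), hdK j,
    hausdorffDist_comm]
  exact infDist_le_hausdorffDist_of_mem hx (by rw [hausdorffEDist_comm]; exact hfin j)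

theorem IsSolutionVector.nonempty_iInter_cthickening (hd : IsSolutionVector A d)
    (hAne : ∀ j, (A j).Nonempty) (hAb : ∀ j, Bornology.IsBounded (A j)) :
    (⋂ j, cthickening (d j) (A j)).Nonempty := by
  obtain ⟨K, hKne, hKsub, -⟩ := hd.exists_subset_iInter_cthickening hAne hAb
  exact hKne.mono hKsub

theorem IsSolutionVector.infDist_iInter_cthickening_le (hd : IsSolutionVector A d)
    (hAne : ∀ j, (A j).Nonempty) (hAb : ∀ j, Bornology.IsBounded (A j)) {j : Fin n} {a : X}
    (ha : a ∈ A j) : infDist a (⋂ j, cthickening (d j) (A j)) ≤ d j := by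
  obtain ⟨K, hKne, hKsub, hAK⟩ := hd.exists_subset_iInter_cthickening hAne hAb
  exact (infDist_le_infDist_of_subset hKsub hKne).trans (hAK j a ha)

theorem IsSolutionVector.exists_lt_infDist (hd : IsSolutionVector A d)
    (hAne : ∀ j, (A j).Nonempty) {K' : Set X} (hK'ne : K'.Nonempty) (hK' : IsCompact K')
    (hK'sub : K' ⊆ ⋂ j, cthickening (d j) (A j)) {i : Fin n}
    (hi : hausdorffDist (A i) K' < d i) : ∃ j, ∃ a ∈ A j, d j < infDist a K' := by
  obtain ⟨K, ⟨-, -, hmin⟩, hdK⟩ := hd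
  by_contra! hle
  have hd0 : ∀ j, 0 ≤ d j := fun j => (hdK j).symm ▸ hausdorffDist_nonneg
  have hK'le : ∀ j, hausdorffDist (A j) K' ≤ d j := fun j =>
    hausdorffDist_le_of_infDist (hd0 j) (hle j) fun y hy =>
      (mem_cthickening_iff_infDist_le (hAne j) (hd0 j)).1 (mem_iInter.1 (hK'sub hy) j)
  have hsum := hmin K' hK'ne hK'
  simp only [steinerSum, ← hdK] at hsum
  exact hsum.not_gt (Finset.sum_lt_sum (fun j _ => hK'le j) ⟨i, Finset.mem_univ _, hi⟩)

end Steiner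

section ConvexSteiner

variable {X : Type*} [NormedAddCommGroup X] [NormedSpace ℝ X] [ProperSpace X] {n : ℕ}
  {A : Fin n → Set X} {d : Fin n → ℝ}

theorem IsSolutionVector.exists_far_mem_frontier (hd : IsSolutionVector A d)
    (hAne : ∀ j, (A j).Nonempty) (hAc : ∀ j, IsCompact (A j)) (hAconv : ∀ j, Convex ℝ (A j))
    {i : Fin n} (hi : ∀ a ∈ A i, infDist a (⋂ j, cthickening (d j) (A j)) < d i) :
    ∃ j, ∃ a ∈ A j, d j ≤ infDist a (⋂ j, cthickening (d j) (A j)) ∧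
      ∃ p ∈ ⋂ j, cthickening (d j) (A j), dist a p ≤ d j ∧
        p ∈ frontier (cthickening (d i) (A i)) := by
  set Kd := ⋂ j, cthickening (d j) (A j)
  have hAb : ∀ j, Bornology.IsBounded (A j) := fun j => (hAc j).isBounded
  have hKdc : IsCompact Kd := isCompact_iInter_cthickening d (hAc i)
  obtain ⟨a₀, ha₀, hmax⟩ :=
    (hAc i).exists_isMaxOn (hAne i) (continuous_infDist_pt Kd).continuousOn
  have hrc : infDist a₀ Kd < d i := hi a₀ ha₀
  have hr0 : 0 ≤ infDist a₀ Kd := infDist_nonneg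
  have hKdi : ∀ x ∈ Kd, infDist x (A i) ≤ d i := fun x hx =>
    (mem_cthickening_iff_infDist_le (hAne i) (hr0.trans hrc.le)).1 (mem_iInter.1 hx i)
  obtain ⟨q, hq, hqa⟩ :=
    hKdc.exists_infDist_eq_dist (hd.nonempty_iInter_cthickening hAne hAb) a₀
  have hqr : infDist q (A i) ≤ infDist a₀ Kd :=
    (infDist_le_dist_of_mem ha₀).trans (by rw [dist_comm, hqa])
  -- cutting `K_d` down to `K_s` would lower the Steiner sum unless some `A j` recedes
  have hshrink : ∀ s ∈ Ico (infDist a₀ Kd) (d i),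
      ∃ j, ∃ a ∈ A j, d j < infDist a {x ∈ Kd | infDist x (A i) ≤ s} := fun s hs =>
    hd.exists_lt_infDist hAne ⟨q, hq, hqr.trans hs.1⟩
      (hKdc.inter_right (isClosed_le (continuous_infDist_pt _) continuous_const))
      (sep_subset _ _)
      ((hausdorffDist_sep_infDist_le hKdc (hr0.trans hs.1) fun a ha =>
        (hmax ha).trans hs.1).trans_lt hs.2)
  obtain ⟨j, a, ha, p, hp, hap, hip, hfar⟩ :=
    exists_forall_le_infDist_setOf_le hAc hKdc (continuous_infDist_pt (A i)) hrc ⟨q, hq, hqr⟩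
      (fun j a ha => hd.infDist_iInter_cthickening_le hAne hAb ha) hshrink
  have hconv : ConvexOn ℝ Kd (infDist · (A i)) := (hAconv i).convexOn_infDist.subset
    (subset_univ _) (convex_iInter fun j => (hAconv j).cthickening _)
  refine ⟨j, a, ha, hconv.le_infDist_of_forall_le_infDist_setOf_le hq hqr hrc hKdi hfar,
    p, hp, hap, ?_⟩
  exact (hAconv i).mem_frontier_cthickening (hAne i) (hr0.trans_lt hrc)
    (le_antisymm (hKdi p hp) hip)

theorem IsSolutionVector.exists_far_point (hd : IsSolutionVector A d)
    (hAne : ∀ j, (A j).Nonempty) (hAc : ∀ j, IsCompact (A j)) (hAconv : ∀ j, Convex ℝ (A j))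
    (i : Fin n) :
    ∃ j, ∃ a ∈ A j, d j ≤ infDist a (⋂ j, cthickening (d j) (A j)) ∧
      ∃ p ∈ ⋂ j, cthickening (d j) (A j), dist a p ≤ d j ∧
        (j = i ∨ p ∈ frontier (cthickening (d i) (A i))) := by
  by_cases hfar : ∃ a ∈ A i, d i ≤ infDist a (⋂ j, cthickening (d j) (A j))
  · obtain ⟨a, ha, hai⟩ := hfar
    have hAb : ∀ j, Bornology.IsBounded (A j) := fun j => (hAc j).isBounded
    obtain ⟨p, hp, hap⟩ := (isCompact_iInter_cthickening d (hAc i)).exists_infDist_eq_dist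
      (hd.nonempty_iInter_cthickening hAne hAb) a
    have hap' : dist a p ≤ d i := hap ▸ hd.infDist_iInter_cthickening_le hAne hAb ha
    exact ⟨i, a, ha, hai, p, hp, hap', Or.inl rfl⟩
  · push Not at hfar
    obtain ⟨j, a, ha, haj, p, hp, hap, hfront⟩ :=
      hd.exists_far_mem_frontier hAne hAc hAconv hfar
    exact ⟨j, a, ha, haj, p, hp, hap, Or.inr hfront⟩

end ConvexSteiner

theorem stmt17_general {X : Type*} [NormedAddCommGroup X] [NormedSpace ℝ X] [FiniteDimensional ℝ X]
    (n : ℕ) (A : Fin n → Set X)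
    (hA : ∀ j, (A j).Nonempty ∧ IsCompact (A j) ∧ Convex ℝ (A j))
    (d : Fin n → ℝ) (hd : IsSolutionVector A d)
    (Kd : Set X) (hKd : Kd = ⋂ j, cthickening (d j) (A j))
    (F : Fin n → Set X) (hF : ∀ j, F j = {a ∈ A j | ball a (d j) ∩ Kd = ∅}) :
    ∀ i : Fin n, ∃ p ∈ ⋃ j, (cthickening (d j) (F j) ∩ Kd),
      p ∈ cthickening (d i) (F i) ∩ Kd ∨ p ∈ frontier (cthickening (d i) (A i)) := by
  intro i
  subst hKd
  obtain ⟨j, a, ha, hfar, p, hp, hap, hji⟩ :=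
    hd.exists_far_point (fun j => (hA j).1) (fun j => (hA j).2.1) (fun j => (hA j).2.2) i
  have haF : a ∈ F j := by
    rw [hF j]
    exact ⟨ha, (disjoint_ball_infDist.mono_left (ball_subset_ball hfar)).inter_eq⟩
  have hpF : p ∈ cthickening (d j) (F j) ∩ ⋂ j, cthickening (d j) (A j) :=
    ⟨mem_cthickening_of_dist_le p a _ _ haF (by rwa [dist_comm]), hp⟩
  refine ⟨p, mem_iUnion.2 ⟨j, hpF⟩, ?_⟩
  rcases hji with rfl | hfront
  exacts [Or.inl hpF, Or.inr hfront]

theorem stmt17 {X : Type*} [NormedAddCommGroup X] [NormedSpace ℝ X] [FiniteDimensional ℝ X]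
    (n : ℕ) (A : Fin n → Set X)
    (hA : ∀ j, (A j).Nonempty ∧ IsCompact (A j) ∧ Convex ℝ (A j))
    (d : Fin n → ℝ) (hd : IsSolutionVector A d) (hdpos : ∀ j, 0 < d j)
    (Kd : Set X) (hKd : Kd = ⋂ j, cthickening (d j) (A j))
    (F : Fin n → Set X) (hF : ∀ j, F j = {a ∈ A j | ball a (d j) ∩ Kd = ∅}) :
    ∀ i : Fin n, ∃ p ∈ ⋃ j, (cthickening (d j) (F j) ∩ Kd),
      p ∈ cthickening (d i) (F i) ∩ Kd ∨ p ∈ frontier (cthickening (d i) (A i)) :=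
  stmt17_general n A hA d hd Kd hKd F hF
end

section
/- Let A = {A_1, …, A_n} be a finite boundary (each A_i a nonempty finite subset) in a finite-dimensional real normed space X, and let A^Conv = {conv(A_1), …, conv(A_n)}. Suppose A is stable, i.e., S_A = S_{A^Conv}. Then for every solution vector d of A, the compact K_d^Conv = ⋂_{i=1}^n B_{d_i}(conv(A_i)) satisfies d_H(conv(A_i), K_d^Conv) = d_i for all i; in particular S(A^Conv, K_d^Conv) = S_{A^Conv}, so K_d^Conv is the maximal Steiner compact of its class for the boundary A^Conv. -/
open Metric Set

/-- `steinerInf A = S_A`, the infimum of `steinerSum A K` over nonempty compact `K`. -/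
noncomputable def steinerInf {X : Type*} [PseudoMetricSpace X] {n : ℕ}
    (A : Fin n → Set X) : ℝ :=
  sInf {s : ℝ | ∃ K : Set X, K.Nonempty ∧ IsCompact K ∧ s = steinerSum A K}

section Hausdorff

variable {α : Type*} [PseudoMetricSpace α] {s t : Set α} {r : ℝ}

theorem subset_cthickening_hausdorffDist (h : hausdorffEDist s t ≠ ⊤) :
    s ⊆ cthickening (hausdorffDist s t) t := fun _ hx => by
  rw [mem_cthickening_iff, hausdorffDist, ENNReal.ofReal_toReal h]
  exact infEDist_le_hausdorffEDist_of_mem hx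

theorem hausdorffDist_le_of_subset_cthickening (hr : 0 ≤ r) (hst : s ⊆ cthickening r t)
    (hts : t ⊆ cthickening r s) : hausdorffDist s t ≤ r :=
  ENNReal.toReal_le_of_le_ofReal hr <| hausdorffEDist_le_of_infEDist
    (fun _ hx => mem_cthickening_iff.1 (hst hx)) (fun _ hx => mem_cthickening_iff.1 (hts hx))

theorem isCompact_iInter_cthickening_s18 [ProperSpace α] {ι : Type*} [Nonempty ι] {C : ι → Set α}
    (d : ι → ℝ) (hC : ∀ i, Bornology.IsBounded (C i)) :
    IsCompact (⋂ i, cthickening (d i) (C i)) := by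
  obtain ⟨i⟩ := ‹Nonempty ι›
  exact isCompact_of_isClosed_isBounded (isClosed_iInter fun _ => isClosed_cthickening)
    ((hC i).cthickening.subset (iInter_subset _ i))

end Hausdorff

section Steiner

variable {X : Type*} [PseudoMetricSpace X] {n : ℕ} {A : Fin n → Set X} {K : Set X}

theorem steinerInf_le_steinerSum (hK : K.Nonempty) (hKc : IsCompact K) :
    steinerInf A ≤ steinerSum A K :=
  csInf_le ⟨0, by rintro s ⟨K', -, -, rfl⟩; exact Finset.sum_nonneg fun _ _ => hausdorffDist_nonneg⟩
    ⟨K, hK, hKc, rfl⟩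

theorem IsSteinerCompact.steinerSum_eq_steinerInf (hK : IsSteinerCompact A K) :
    steinerSum A K = steinerInf A :=
  le_antisymm
    (le_csInf ⟨_, K, hK.1, hK.2.1, rfl⟩ fun _ ⟨K', hne, hc, hs⟩ => hs ▸ hK.2.2 K' hne hc)
    (steinerInf_le_steinerSum hK.1 hK.2.1)

end Steiner

section Convex

variable {X : Type*} [NormedAddCommGroup X] [NormedSpace ℝ X] {ι : Type*} {A : ι → Set X}
  {K : Set X}

theorem subset_iInter_cthickening_convexHull
    (hfin : ∀ i, hausdorffEDist (A i) K ≠ ⊤) :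
    K ⊆ ⋂ i, cthickening (hausdorffDist (A i) K) (convexHull ℝ (A i)) := by
  refine subset_iInter fun i => ?_
  rw [hausdorffDist_comm]
  exact (subset_cthickening_hausdorffDist (by rw [hausdorffEDist_comm]; exact hfin i)).trans
    (cthickening_subset_of_subset _ (subset_convexHull ℝ (A i)))

theorem hausdorffDist_convexHull_iInter_cthickening_le
    (hfin : ∀ i, hausdorffEDist (A i) K ≠ ⊤) (i : ι) :
    hausdorffDist (convexHull ℝ (A i))
        (⋂ j, cthickening (hausdorffDist (A j) K) (convexHull ℝ (A j))) ≤
      hausdorffDist (A i) K := by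
  have hconvex : Convex ℝ (⋂ j, cthickening (hausdorffDist (A j) K) (convexHull ℝ (A j))) :=
    convex_iInter fun j => (convex_convexHull ℝ (A j)).cthickening _
  refine hausdorffDist_le_of_subset_cthickening hausdorffDist_nonneg ?_ (iInter_subset _ i)
  exact convexHull_min ((subset_cthickening_hausdorffDist (hfin i)).trans
    (cthickening_subset_of_subset _ (subset_iInter_cthickening_convexHull hfin)))
    (hconvex.cthickening _)

end Convex

theorem stmt18 {X : Type*} [NormedAddCommGroup X] [NormedSpace ℝ X] [FiniteDimensional ℝ X]
    (n : ℕ) (A : Fin n → Set X)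
    (hA : ∀ i, (A i).Nonempty ∧ (A i).Finite)
    (hstable : steinerInf A = steinerInf (fun i => convexHull ℝ (A i))) :
    ∀ d : Fin n → ℝ, IsSolutionVector A d →
      ∀ KdConv : Set X, KdConv = ⋂ i, cthickening (d i) (convexHull ℝ (A i)) →
        (∀ i, Metric.hausdorffDist (convexHull ℝ (A i)) KdConv = d i) ∧
        steinerSum (fun i => convexHull ℝ (A i)) KdConv
          = steinerInf (fun i => convexHull ℝ (A i)) ∧
        (∀ K' : Set X, K'.Nonempty → IsCompact K' →
          (∀ i, Metric.hausdorffDist (convexHull ℝ (A i)) K' = d i) → K' ⊆ KdConv) := by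
  rintro d ⟨K, hK, hdK⟩ KdConv rfl
  obtain rfl : d = fun i => hausdorffDist (A i) K := funext hdK
  have hbdd : ∀ i, Bornology.IsBounded (convexHull ℝ (A i)) :=
    fun i => ((hA i).2.isCompact_convexHull ℝ).isBounded
  have hfin : ∀ i, hausdorffEDist (A i) K ≠ ⊤ := fun i =>
    hausdorffEDist_ne_top_of_nonempty_of_bounded (hA i).1 hK.1 (hA i).2.isBounded
      hK.2.1.isBounded
  have hle := hausdorffDist_convexHull_iInter_cthickening_le hfin
  have hsum : ∑ i, hausdorffDist (A i) K = steinerInf (fun i => convexHull ℝ (A i)) := by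
    rw [← hstable, ← hK.steinerSum_eq_steinerInf, steinerSum]
  have hge : steinerInf (fun i => convexHull ℝ (A i)) ≤
      steinerSum (fun i => convexHull ℝ (A i))
        (⋂ i, cthickening (hausdorffDist (A i) K) (convexHull ℝ (A i))) := by
    rcases isEmpty_or_nonempty (Fin n) with hn | hn
    · simp [steinerSum, ← hsum]
    · exact steinerInf_le_steinerSum (hK.1.mono (subset_iInter_cthickening_convexHull hfin))
        (isCompact_iInter_cthickening_s18 _ hbdd)
  have hdist := (Finset.sum_eq_sum_iff_of_le fun i _ => hle i).1
    (le_antisymm (Finset.sum_le_sum fun i _ => hle i) (hsum ▸ hge))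
  refine ⟨fun i => hdist i (Finset.mem_univ i),
    (Finset.sum_congr rfl hdist).trans hsum, fun K' hne hc hK' => subset_iInter fun i => ?_⟩
  rw [← hK' i, hausdorffDist_comm]
  exact subset_cthickening_hausdorffDist
    (hausdorffEDist_ne_top_of_nonempty_of_bounded hne ((hA i).1.convexHull) hc.isBounded (hbdd i))
end
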